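/- arXiv:0804.2209 — 2 statements merged into one kernel-verified Lean document; each statement's English description precedes it below -/
import Mathlib

section
/- Let Γ : L = ⊕_{g∈G} L_g be a G-grading of a finite-dimensional complex Lie algebra L by an abelian group G. Then Gr(Diag(Γ)) = Γ; explicitly: (i) for any two distinct g, h ∈ G with L_g ≠ 0 and L_h ≠ 0, there exists an automorphism f ∈ Diag(Γ) whose scalar of action on L_g differs from its scalar of action on L_h, so each nonzero L_g is exactly a simultaneous eigenspace of Diag(Γ); and (ii) there exists a set 𝒢 ⊆ Aut L of pairwise commuting diagonalizable automorphisms with Gr(𝒢) = Γ. -/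
/-!
Every character `ψ : G → ℂˣ` yields an automorphism in `Diag(Γ)`, acting on `L_g` by `ψ g`;
it preserves brackets because `ψ (g + h) = ψ g * ψ h`. Since `ℚ/ℤ` is an injective cogenerator
of abelian groups and embeds in `ℂˣ` (through `ℝ/ℤ`), characters separate the points of `G`,
so the automorphisms in `Diag(Γ)` separate distinct grading subspaces. Comparing components
then shows that a common eigenvector of `Diag(Γ)` is homogeneous, which identifies the
simultaneous eigenspaces of `Diag(Γ)` with the nonzero `L_g`.
-/

/-- The eigenspace of a Lie algebra automorphism `g` for the eigenvalue `μ`. -/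
def eig {L : Type} [LieRing L] [LieAlgebra ℂ L] (g : L ≃ₗ⁅ℂ⁆ L) (μ : ℂ) :
    Submodule ℂ L where
  carrier := {x | g x = μ • x}
  add_mem' := by
    intro a b ha hb
    simp only [Set.mem_setOf_eq] at *
    rw [show g (a + b) = g a + g b from g.toLinearEquiv.map_add a b, ha, hb, smul_add]
  zero_mem' := by
    show g 0 = μ • 0
    rw [show g 0 = 0 from g.toLinearEquiv.map_zero, smul_zero]
  smul_mem' := by
    intro c x hx
    simp only [Set.mem_setOf_eq] at *
    rw [show g (c • x) = c • g x from g.toLinearEquiv.map_smul c x, hx, smul_comm]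

/-- An automorphism is diagonalizable when `L` is the direct sum of its eigenspaces. -/
def IsDiagonalizable {L : Type} [LieRing L] [LieAlgebra ℂ L] (g : L ≃ₗ⁅ℂ⁆ L) : Prop :=
  iSupIndep (fun μ : ℂ => eig g μ) ∧ (⨆ μ : ℂ, eig g μ) = ⊤

/-- Internal direct sum decomposition of `L` into a family of subspaces. -/
def IsDecomposition {L : Type} [LieRing L] [LieAlgebra ℂ L] {J : Type}
    (ℒ : J → Submodule ℂ L) : Prop :=
  iSupIndep ℒ ∧ (⨆ j, ℒ j) = ⊤

/-- A group grading of `L` by an abelian group `G`. -/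
def IsGroupGrading {L : Type} [LieRing L] [LieAlgebra ℂ L]
    {G : Type} [AddCommGroup G] (ℒ : G → Submodule ℂ L) : Prop :=
  IsDecomposition ℒ ∧ ∀ g h : G, ∀ x ∈ ℒ g, ∀ y ∈ ℒ h, ⁅x, y⁆ ∈ ℒ (g + h)

/-- `Diag(Γ)`: the automorphisms of `L` acting on each grading subspace of `Γ` as
multiplication by a nonzero scalar. -/
def Diag {L : Type} [LieRing L] [LieAlgebra ℂ L] {J : Type}
    (ℒ : J → Submodule ℂ L) : Set (L ≃ₗ⁅ℂ⁆ L) :=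
  {f | ∀ j : J, ∃ α : ℂ, α ≠ 0 ∧ ∀ x ∈ ℒ j, f x = α • x}

open DirectSum

noncomputable def ratAddCircleToReal : AddCircle (1 : ℚ) →+ AddCircle (1 : ℝ) :=
  QuotientAddGroup.map _ _ (Rat.castHom ℝ).toAddMonoidHom <| by
    rintro _ ⟨n, rfl⟩
    exact ⟨n, by simp⟩

theorem ratAddCircleToReal_injective : Function.Injective ratAddCircleToReal := by
  refine (injective_iff_map_eq_zero _).2 fun x hx => ?_
  induction x using QuotientAddGroup.induction_on with
  | H q =>
    obtain ⟨n, hn⟩ := (AddCircle.coe_eq_zero_iff (1 : ℝ)).1 hx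
    refine (AddCircle.coe_eq_zero_iff (1 : ℚ)).2 ⟨n, ?_⟩
    simp only [zsmul_eq_mul, mul_one] at hn ⊢
    exact Rat.cast_injective (α := ℝ) (by simpa using hn)

theorem AddChar.exists_apply_ne_one_of_ne_zero {G : Type*} [AddCommGroup G] {a : G}
    (ha : a ≠ 0) : ∃ ψ : AddChar G ℂˣ, ψ a ≠ 1 := by
  obtain ⟨c, hc⟩ := CharacterModule.exists_character_apply_ne_zero_of_ne_zero ha
  refine ⟨Circle.toUnits.compAddChar
    (AddCircle.toCircle_addChar.compAddMonoidHom (ratAddCircleToReal.comp c)), fun h => hc ?_⟩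
  have hcircle : AddCircle.toCircle (ratAddCircleToReal.comp c a) =
      AddCircle.toCircle (0 : AddCircle (1 : ℝ)) := by
    simpa [Units.ext_iff, Circle.ext_iff, AddCircle.toCircle_addChar] using h
  exact ratAddCircleToReal_injective
    ((AddCircle.injective_toCircle one_ne_zero hcircle).trans (map_zero _).symm)

section ScaleComponents

variable {ι R M : Type*} [DecidableEq ι] [CommRing R] [AddCommGroup M] [Module R M]
  (ℳ : ι → Submodule R M) [Decomposition ℳ]

noncomputable def scaleComponents (u : ι → Rˣ) : M ≃ₗ[R] M :=
  decomposeLinearEquiv ℳ ≪≫ₗ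
    DFinsupp.mapRange.linearEquiv (fun i => LinearEquiv.smulOfUnit (u i)) ≪≫ₗ
    (decomposeLinearEquiv ℳ).symm

variable {ℳ}

theorem decompose_scaleComponents (u : ι → Rˣ) (x : M) (i : ι) :
    decompose ℳ (scaleComponents ℳ u x) i = (u i : R) • decompose ℳ x i := by
  change decomposeLinearEquiv ℳ ((decomposeLinearEquiv ℳ).symm _) i = _
  rw [LinearEquiv.apply_symm_apply]
  rfl

theorem scaleComponents_apply_of_mem (u : ι → Rˣ) {i : ι} {x : M} (hx : x ∈ ℳ i) :
    scaleComponents ℳ u x = (u i : R) • x := by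
  refine (decompose ℳ).injective (DFinsupp.ext fun j => ?_)
  rw [decompose_scaleComponents, decompose_smul, DirectSum.smul_apply]
  obtain rfl | hij := eq_or_ne i j
  · rfl
  · rw [show decompose ℳ x j = 0 from Subtype.ext (decompose_of_mem_ne ℳ hx hij)]
    simp

theorem coe_eq_of_scaleComponents_apply_eq_smul [IsCancelMulZero R] [Module.IsTorsionFree R M]
    {u : ι → Rˣ} {x : M} {μ : R} (hx : scaleComponents ℳ u x = μ • x) {i : ι}
    (hi : decompose ℳ x i ≠ 0) : (u i : R) = μ := by
  have hxi := congrArg (fun y => decompose ℳ y i) hx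
  simp only [decompose_scaleComponents, decompose_smul, DirectSum.smul_apply] at hxi
  exact smul_left_injective R hi hxi

theorem mem_of_decompose_apply_eq_zero {x : M} {i : ι} (h : ∀ j ≠ i, decompose ℳ x j = 0) :
    x ∈ ℳ i := by
  have hx : decompose ℳ x = of (fun i => ℳ i) i (decompose ℳ x i) := DFinsupp.ext fun j => by
    obtain rfl | hji := eq_or_ne j i
    · simp
    · rw [h j hji, of_eq_of_ne _ _ _ hji]
  rw [← (decompose ℳ).symm_apply_apply x, hx, decompose_symm_of]
  exact SetLike.coe_mem _

end ScaleComponents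

section Characters

variable {G R L : Type*} [AddCommGroup G] [DecidableEq G] [CommRing R] [LieRing L]
  [LieAlgebra R L] {ℒ : G → Submodule R L} [Decomposition ℒ]

theorem scaleComponents_lie (hℒ : ∀ g h : G, ∀ x ∈ ℒ g, ∀ y ∈ ℒ h, ⁅x, y⁆ ∈ ℒ (g + h))
    (ψ : AddChar G Rˣ) (x y : L) :
    scaleComponents ℒ ψ ⁅x, y⁆ = ⁅scaleComponents ℒ ψ x, scaleComponents ℒ ψ y⁆ := by
  induction x using Decomposition.inductionOn ℒ with
  | zero => simp
  | add x x' hx hx' => simp only [add_lie, map_add, hx, hx']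
  | @homogeneous g x =>
    induction y using Decomposition.inductionOn ℒ with
    | zero => simp
    | add y y' hy hy' => simp only [lie_add, map_add, hy, hy']
    | @homogeneous h y =>
      rw [scaleComponents_apply_of_mem _ (hℒ g h x x.2 y y.2),
        scaleComponents_apply_of_mem _ x.2, scaleComponents_apply_of_mem _ y.2,
        AddChar.map_add_eq_mul, Units.val_mul, smul_lie, lie_smul, mul_smul]

noncomputable def characterAut (hℒ : ∀ g h : G, ∀ x ∈ ℒ g, ∀ y ∈ ℒ h, ⁅x, y⁆ ∈ ℒ (g + h))
    (ψ : AddChar G Rˣ) : L ≃ₗ⁅R⁆ L :=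
  { scaleComponents ℒ ψ with map_lie' := scaleComponents_lie hℒ ψ _ _ }

end Characters

theorem eig_eq_eigenspace {L : Type} [LieRing L] [LieAlgebra ℂ L] (f : L ≃ₗ⁅ℂ⁆ L) (μ : ℂ) :
    eig f μ = Module.End.eigenspace (f : L →ₗ[ℂ] L) μ := by
  ext x
  rw [Module.End.mem_eigenspace_iff]
  rfl

section Diag

variable {L J : Type} [LieRing L] [LieAlgebra ℂ L] {ℒ : J → Submodule ℂ L}

theorem isDiagonalizable_of_mem_Diag (hℒ : ⨆ j, ℒ j = ⊤) {f : L ≃ₗ⁅ℂ⁆ L} (hf : f ∈ Diag ℒ) :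
    IsDiagonalizable f := by
  refine ⟨?_, eq_top_iff.2 (hℒ ▸ iSup_le fun j => ?_)⟩
  · simp_rw [eig_eq_eigenspace]
    exact Module.End.eigenspaces_iSupIndep _
  · obtain ⟨α, -, hα⟩ := hf j
    exact le_iSup_of_le α hα

theorem commute_of_mem_Diag (hℒ : ⨆ j, ℒ j = ⊤) {f f' : L ≃ₗ⁅ℂ⁆ L} (hf : f ∈ Diag ℒ)
    (hf' : f' ∈ Diag ℒ) (x : L) : f (f' x) = f' (f x) := by
  have hx : x ∈ ⨆ j, ℒ j := hℒ ▸ Submodule.mem_top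
  refine Submodule.iSup_induction ℒ (motive := fun x => f (f' x) = f' (f x)) hx
    (fun j y hy => ?_) (by simp) (fun y y' hy hy' => by simp only [map_add, hy, hy'])
  obtain ⟨α, -, hα⟩ := hf j
  obtain ⟨α', -, hα'⟩ := hf' j
  rw [hα' y hy, map_smul, hα y hy, map_smul, hα' y hy, smul_comm]

end Diag

namespace IsGroupGrading

variable {L G : Type} [LieRing L] [LieAlgebra ℂ L] [AddCommGroup G] {ℒ : G → Submodule ℂ L}

theorem isInternal [DecidableEq G] (hΓ : IsGroupGrading ℒ) : IsInternal ℒ :=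
  isInternal_submodule_of_iSupIndep_of_iSup_eq_top hΓ.1.1 hΓ.1.2

theorem characterAut_mem_Diag [DecidableEq G] [Decomposition ℒ] (hΓ : IsGroupGrading ℒ)
    (ψ : AddChar G ℂˣ) : characterAut hΓ.2 ψ ∈ Diag ℒ :=
  fun g => ⟨ψ g, Units.ne_zero _, fun _ hx => scaleComponents_apply_of_mem _ hx⟩

theorem exists_Diag_separating (hΓ : IsGroupGrading ℒ) {g h : G} (hgh : g ≠ h) :
    ∃ f ∈ Diag ℒ, ∃ α β : ℂ, α ≠ β ∧
      (∀ x ∈ ℒ g, f x = α • x) ∧ (∀ x ∈ ℒ h, f x = β • x) := by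
  classical
  let := hΓ.isInternal.chooseDecomposition
  obtain ⟨ψ, hψ⟩ := AddChar.exists_apply_ne_one_of_ne_zero (sub_ne_zero.2 hgh)
  refine ⟨characterAut hΓ.2 ψ, hΓ.characterAut_mem_Diag ψ, ψ g, ψ h, fun hgh' => hψ ?_,
    fun _ hx => scaleComponents_apply_of_mem _ hx, fun _ hx => scaleComponents_apply_of_mem _ hx⟩
  rw [AddChar.map_sub_eq_div, Units.val_inj.1 hgh', div_self']

theorem exists_mem_of_forall_Diag_eigenvector (hΓ : IsGroupGrading ℒ) {x : L} (hx0 : x ≠ 0)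
    (hx : ∀ f ∈ Diag ℒ, ∃ μ : ℂ, f x = μ • x) : ∃ g, x ∈ ℒ g := by
  classical
  let := hΓ.isInternal.chooseDecomposition
  obtain ⟨g, hg⟩ : ∃ g, decompose ℒ x g ≠ 0 := by
    by_contra! h
    exact hx0 ((decompose ℒ).injective ((DFinsupp.ext h).trans (decompose_zero ℒ).symm))
  refine ⟨g, mem_of_decompose_apply_eq_zero fun h hhg => ?_⟩
  by_contra hh
  obtain ⟨ψ, hψ⟩ := AddChar.exists_apply_ne_one_of_ne_zero (sub_ne_zero.2 hhg)
  obtain ⟨μ, hμ⟩ := hx _ (hΓ.characterAut_mem_Diag ψ)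
  have hψhg : ψ h = ψ g := Units.ext <|
    (coe_eq_of_scaleComponents_apply_eq_smul hμ hh).trans
      (coe_eq_of_scaleComponents_apply_eq_smul hμ hg).symm
  exact hψ (by rw [AddChar.map_sub_eq_div, hψhg, div_self'])

theorem mem_iff_forall_Diag (hΓ : IsGroupGrading ℒ) {g : G} (x : L) :
    x ∈ ℒ g ↔ ∀ f ∈ Diag ℒ, ∀ α : ℂ, (∀ y ∈ ℒ g, f y = α • y) → f x = α • x := by
  refine ⟨fun hx _ _ _ hα => hα x hx, fun hx => ?_⟩
  obtain rfl | hx0 := eq_or_ne x 0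
  · exact zero_mem _
  obtain ⟨g', hg'⟩ := hΓ.exists_mem_of_forall_Diag_eigenvector hx0
    fun f hf => ⟨_, hx f hf _ (hf g).choose_spec.2⟩
  obtain rfl | hgg' := eq_or_ne g g'
  · exact hg'
  obtain ⟨f, hf, α, β, hαβ, hα, hβ⟩ := hΓ.exists_Diag_separating hgg'
  exact absurd (smul_left_injective ℂ hx0 ((hx f hf α hα).symm.trans (hβ x hg'))) hαβ

theorem iInf_eig_eq (hΓ : IsGroupGrading ℒ) {g : G} (hg : ℒ g ≠ ⊥) {lam : Diag ℒ → ℂ}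
    (hlam : ∀ f : Diag ℒ, ℒ g ≤ eig f.1 (lam f)) : ⨅ f : Diag ℒ, eig f.1 (lam f) = ℒ g := by
  obtain ⟨z, hz, hz0⟩ := Submodule.exists_mem_ne_zero_of_ne_bot hg
  refine le_antisymm (fun x hx => (hΓ.mem_iff_forall_Diag x).2 fun f hf α hα => ?_) (le_iInf hlam)
  rw [smul_left_injective ℂ hz0 ((hα z hz).symm.trans (hlam ⟨f, hf⟩ hz))]
  exact (Submodule.mem_iInf _).1 hx ⟨f, hf⟩

theorem jointEigenspaces_Diag (hΓ : IsGroupGrading ℒ) :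
    {V : Submodule ℂ L | V ≠ ⊥ ∧ ∃ lam : Diag ℒ → ℂ, V = ⨅ f : Diag ℒ, eig f.1 (lam f)} =
      {V : Submodule ℂ L | V ≠ ⊥ ∧ ∃ g : G, V = ℒ g} := by
  ext V
  refine and_congr_right fun hV => ⟨?_, ?_⟩
  · rintro ⟨lam, rfl⟩
    obtain ⟨x, hx, hx0⟩ := Submodule.exists_mem_ne_zero_of_ne_bot hV
    have hxlam : ∀ f : Diag ℒ, f.1 x = lam f • x := (Submodule.mem_iInf _).1 hx
    obtain ⟨g, hxg⟩ :=
      hΓ.exists_mem_of_forall_Diag_eigenvector hx0 fun f hf => ⟨_, hxlam ⟨f, hf⟩⟩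
    refine ⟨g, hΓ.iInf_eig_eq ((Submodule.ne_bot_iff _).2 ⟨x, hxg, hx0⟩) fun f y hy => ?_⟩
    obtain ⟨α, -, hα⟩ := f.2 g
    rw [← smul_left_injective ℂ hx0 ((hα x hxg).symm.trans (hxlam f))]
    exact hα y hy
  · rintro ⟨g, rfl⟩
    exact ⟨fun f => (f.2 g).choose,
      (hΓ.iInf_eig_eq hV fun f y hy => (f.2 g).choose_spec.2 y hy).symm⟩

end IsGroupGrading

theorem statement3_general (L : Type) [LieRing L] [LieAlgebra ℂ L]
    (G : Type) [AddCommGroup G] (ℒ : G → Submodule ℂ L)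
    (hΓ : IsGroupGrading ℒ) :
    ((∀ g h : G, g ≠ h → ℒ g ≠ ⊥ → ℒ h ≠ ⊥ →
      ∃ f ∈ Diag ℒ, ∃ α β : ℂ, α ≠ β ∧
        (∀ x ∈ ℒ g, f x = α • x) ∧ (∀ x ∈ ℒ h, f x = β • x)) ∧
     (∀ g : G, ℒ g ≠ ⊥ → ∀ x : L,
        (x ∈ ℒ g ↔ ∀ f ∈ Diag ℒ, ∀ α : ℂ, (∀ y ∈ ℒ g, f y = α • y) → f x = α • x))) ∧
    (∃ 𝒢 : Set (L ≃ₗ⁅ℂ⁆ L),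
      (∀ f ∈ 𝒢, IsDiagonalizable f) ∧
      (∀ f ∈ 𝒢, ∀ f' ∈ 𝒢, ∀ x : L, f (f' x) = f' (f x)) ∧
      {V : Submodule ℂ L | V ≠ ⊥ ∧ ∃ lam : 𝒢 → ℂ, V = ⨅ f : 𝒢, eig f.1 (lam f)} =
        {V : Submodule ℂ L | V ≠ ⊥ ∧ ∃ g : G, V = ℒ g}) :=
  ⟨⟨fun _ _ hgh _ _ => hΓ.exists_Diag_separating hgh, fun _ _ x => hΓ.mem_iff_forall_Diag x⟩,
    Diag ℒ, fun _ hf => isDiagonalizable_of_mem_Diag hΓ.1.2 hf,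
    fun _ hf _ hf' => commute_of_mem_Diag hΓ.1.2 hf hf', hΓ.jointEigenspaces_Diag⟩

/-- for a `G`-grading `Γ` of a finite-dimensional complex Lie algebra `L` one
has `Gr(Diag(Γ)) = Γ`.  Explicitly: (i) any two distinct nonzero grading subspaces are
separated by an automorphism in `Diag(Γ)`, so each nonzero `L_g` is exactly the
simultaneous eigenspace of `Diag(Γ)` for the corresponding system of eigenvalues; and
(ii) there is a set `𝒢` of pairwise commuting diagonalizable automorphisms of `L` whose
nonzero simultaneous eigenspaces are precisely the nonzero subspaces of `Γ`,
i.e. `Gr(𝒢) = Γ`. -/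
theorem statement3 (L : Type) [LieRing L] [LieAlgebra ℂ L] [FiniteDimensional ℂ L]
    (G : Type) [AddCommGroup G] (ℒ : G → Submodule ℂ L)
    (hΓ : IsGroupGrading ℒ) :
    ((∀ g h : G, g ≠ h → ℒ g ≠ ⊥ → ℒ h ≠ ⊥ →
      ∃ f ∈ Diag ℒ, ∃ α β : ℂ, α ≠ β ∧
        (∀ x ∈ ℒ g, f x = α • x) ∧ (∀ x ∈ ℒ h, f x = β • x)) ∧
     (∀ g : G, ℒ g ≠ ⊥ → ∀ x : L,
        (x ∈ ℒ g ↔ ∀ f ∈ Diag ℒ, ∀ α : ℂ, (∀ y ∈ ℒ g, f y = α • y) → f x = α • x))) ∧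
    (∃ 𝒢 : Set (L ≃ₗ⁅ℂ⁆ L),
      (∀ f ∈ 𝒢, IsDiagonalizable f) ∧
      (∀ f ∈ 𝒢, ∀ f' ∈ 𝒢, ∀ x : L, f (f' x) = f' (f x)) ∧
      {V : Submodule ℂ L | V ≠ ⊥ ∧ ∃ lam : 𝒢 → ℂ, V = ⨅ f : 𝒢, eig f.1 (lam f)} =
        {V : Submodule ℂ L | V ≠ ⊥ ∧ ∃ g : G, V = ℒ g}) :=
  statement3_general L G ℒ hΓ
end

section
/- Let L be a finite-dimensional simple complex Lie algebra and let Γ : L = ⊕_{j∈J} L_j be a grading of L. If the index set J can be embedded into a commutative semigroup S such that for all j,k ∈ J with [L_j,L_k] ≠ 0 one has j·k ∈ J and [L_j, L_k] ⊆ L_{j·k}, then J can also be embedded into an abelian group with the same property; that is, Γ is a group grading. -/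
/-- A grading of a Lie algebra `L`: a direct sum decomposition into nonzero subspaces
such that the bracket of any two subspaces lies in a single subspace. -/
def IsGrading {L : Type} [LieRing L] [LieAlgebra ℂ L] {J : Type}
    (ℒ : J → Submodule ℂ L) : Prop :=
  iSupIndep ℒ ∧ (⨆ j, ℒ j) = ⊤ ∧ (∀ j, ℒ j ≠ ⊥) ∧
  ∀ j k : J, ∃ l : J, ∀ x ∈ ℒ j, ∀ y ∈ ℒ k, ⁅x, y⁆ ∈ ℒ l

/-!
Let `P` be the subsemigroup generated by the image of `J`. For `u ∈ J`, the components `L_w`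
with `ι w ∈ P · ι u` span a subspace that is stable under `ad L` and contains `[L, L_u] ≠ 0`
(the centre of `L` is trivial), so by simplicity it is all of `L`; independence of the
components then forces `ι v ∈ P · ι u` for every `v`. Hence every element of `P` divides every
other inside `P`, and a commutative semigroup with this property is a group.
-/

def IsGradedBy {R L J S : Type*} [CommRing R] [LieRing L] [LieAlgebra R L] [Mul S]
    (ℒ : J → Submodule R L) (ι : J → S) : Prop :=
  ∀ j k : J, (¬ ∀ x ∈ ℒ j, ∀ y ∈ ℒ k, ⁅x, y⁆ = 0) →
    ∃ l : J, ι l = ι j * ι k ∧ ∀ x ∈ ℒ j, ∀ y ∈ ℒ k, ⁅x, y⁆ ∈ ℒ l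

theorem nonempty_of_iSup_eq_top {α ι : Type*} [CompleteLattice α] [Nontrivial α] {t : ι → α}
    (ht : ⨆ i, t i = ⊤) : Nonempty ι := by
  by_contra h
  rw [not_nonempty_iff] at h
  rw [iSup_of_empty] at ht
  exact bot_ne_top ht

noncomputable abbrev CommGroup.ofExistsMulEq (G : Type*) [CommSemigroup G] [Nonempty G]
    (h : ∀ x y : G, ∃ c, c * x = y) : CommGroup G :=
  let x₀ : G := Classical.arbitrary G
  let e : G := Classical.choose (h x₀ x₀)
  have one_mul : ∀ y : G, e * y = y := fun y => by
    obtain ⟨c, rfl⟩ := h x₀ y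
    rw [mul_left_comm, Classical.choose_spec (h x₀ x₀)]
  letI : One G := ⟨e⟩
  letI : Inv G := ⟨fun y => Classical.choose (h y e)⟩
  { Group.ofLeftAxioms mul_assoc one_mul fun y => Classical.choose_spec (h y e) with
    mul_comm := mul_comm }

namespace Subsemigroup

variable {S : Type*} [CommSemigroup S] {T : Set S}

theorem exists_mul_eq_of_mem_closure (hT : ∀ a ∈ T, ∀ b ∈ T, ∃ c ∈ closure T, c * a = b)
    (hne : T.Nonempty) {x y : S} (hx : x ∈ closure T) (hy : y ∈ closure T) :
    ∃ c ∈ closure T, c * x = y := by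
  have dvd_left : ∀ a ∈ T, ∀ y ∈ closure T, ∃ c ∈ closure T, c * a = y := by
    intro a ha y hy
    induction hy using closure_induction with
    | mem b hb => exact hT a ha b hb
    | mul y₁ y₂ _ hy₂ ih _ =>
      obtain ⟨c, hc, rfl⟩ := ih
      exact ⟨c * y₂, mul_mem hc hy₂, mul_right_comm c y₂ a⟩
  have dvd_right : ∀ a ∈ T, ∀ x ∈ closure T, ∃ c ∈ closure T, c * x = a := by
    intro a ha x hx
    induction hx using closure_induction with
    | mem b hb => exact hT b hb a ha
    | mul x₁ x₂ _ _ ih₁ ih₂ =>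
      obtain ⟨c₁, hc₁, hac₁⟩ := ih₁
      obtain ⟨c₂, hc₂, hac₂⟩ := ih₂
      obtain ⟨d, hd, rfl⟩ := dvd_left a ha c₁ hc₁
      refine ⟨d * c₂, mul_mem hd hc₂, ?_⟩
      calc d * c₂ * (x₁ * x₂) = d * (c₂ * x₂) * x₁ := by ac_rfl
        _ = a := by rw [hac₂, hac₁]
  obtain ⟨a, ha⟩ := hne
  obtain ⟨d, hd, hdx⟩ := dvd_right a ha x hx
  obtain ⟨c, hc, hca⟩ := dvd_left a ha y hy
  exact ⟨c * d, mul_mem hc hd, by rw [mul_assoc, hdx, hca]⟩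

end Subsemigroup

section LieAlgebra

variable {R L J : Type*} [CommRing R] [LieRing L] [LieAlgebra R L] {ℒ : J → Submodule R L}

theorem lie_mem_of_iSup_eq_top (hsup : ⨆ j, ℒ j = ⊤) {Q : Submodule R L} {y : L}
    (h : ∀ j, ∀ x ∈ ℒ j, ⁅x, y⁆ ∈ Q) (x : L) : ⁅x, y⁆ ∈ Q := by
  have hle : ⨆ j, ℒ j ≤ Q.comap (LieModule.toEnd R L L y) := iSup_le fun j z hz => by
    rw [Submodule.mem_comap, LieModule.toEnd_apply_apply, ← lie_skew, neg_mem_iff]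
    exact h j z hz
  have hx := hle (hsup ▸ Submodule.mem_top : x ∈ ⨆ j, ℒ j)
  rwa [Submodule.mem_comap, LieModule.toEnd_apply_apply, ← lie_skew, neg_mem_iff] at hx

theorem Submodule.eq_top_of_forall_lie_mem [LieAlgebra.IsSimple R L] {Q : Submodule R L}
    (hQ : ∀ x : L, ∀ y ∈ Q, ⁅x, y⁆ ∈ Q) (hne : Q ≠ ⊥) : Q = ⊤ := by
  let I : LieIdeal R L := { Q with lie_mem := hQ _ _ }
  have hI : I ≠ ⊥ := fun h => hne (congrArg LieSubmodule.toSubmodule h)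
  have hItop : I = ⊤ := (LieAlgebra.IsSimple.eq_bot_or_eq_top I).resolve_left hI
  exact congrArg LieSubmodule.toSubmodule hItop

theorem exists_lie_ne_zero [LieModule.IsFaithful R L L] {y : L} (hy : y ≠ 0) :
    ∃ x : L, ⁅x, y⁆ ≠ 0 := by
  by_contra! h
  have hcenter : y ∈ LieAlgebra.center R L := (LieModule.mem_maxTrivSubmodule R L L y).mpr h
  simp only [LieAlgebra.center_eq_bot, LieSubmodule.mem_bot] at hcenter
  exact hy hcenter

variable {S : Type*}

theorem IsGradedBy.lie_mem_biSup [Mul S] {ι : J → S} (hℒ : IsGradedBy ℒ ι)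
    (hsup : ⨆ j, ℒ j = ⊤) {A : Set J} {w : J} (hw : ∀ j l, ι l = ι j * ι w → l ∈ A) (x : L)
    {y : L} (hy : y ∈ ℒ w) : ⁅x, y⁆ ∈ ⨆ l ∈ A, ℒ l := by
  refine lie_mem_of_iSup_eq_top hsup (fun j z hz => ?_) x
  by_cases hzero : ∀ x ∈ ℒ j, ∀ y ∈ ℒ w, ⁅x, y⁆ = 0
  · rw [hzero z hz y hy]
    exact zero_mem _
  · obtain ⟨l, hl, hmem⟩ := hℒ j w hzero
    exact Submodule.mem_iSup_of_mem l (Submodule.mem_iSup_of_mem (hw j l hl) (hmem z hz y hy))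

theorem IsGradedBy.exists_mul_eq [CommSemigroup S] [LieAlgebra.IsSimple R L] {ι : J → S}
    (hℒ : IsGradedBy ℒ ι) (hind : iSupIndep ℒ) (hsup : ⨆ j, ℒ j = ⊤) (hne : ∀ j, ℒ j ≠ ⊥)
    (u v : J) : ∃ c ∈ Subsemigroup.closure (Set.range ι), c * ι u = ι v := by
  set P := Subsemigroup.closure (Set.range ι)
  have memP (j : J) : ι j ∈ P := Subsemigroup.subset_closure ⟨j, rfl⟩
  set A : Set J := {w | ∃ c ∈ P, c * ι u = ι w}
  have closed : ∀ w, (w = u ∨ w ∈ A) → ∀ j l, ι l = ι j * ι w → l ∈ A := by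
    rintro w (rfl | ⟨c, hc, hcw⟩) j l hl
    · exact ⟨ι j, memP j, hl.symm⟩
    · exact ⟨ι j * c, mul_mem (memP j) hc, by rw [hl, ← hcw, mul_assoc]⟩
  have hideal : ∀ x : L, ∀ y ∈ ⨆ w ∈ A, ℒ w, ⁅x, y⁆ ∈ ⨆ w ∈ A, ℒ w := by
    intro x y hy
    have hle : ⨆ w ∈ A, ℒ w ≤ (⨆ w ∈ A, ℒ w).comap (LieModule.toEnd R L L x) :=
      iSup₂_le fun w hw z hz => hℒ.lie_mem_biSup hsup (closed w (Or.inr hw)) x hz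
    exact hle hy
  obtain ⟨y, hy, hy0⟩ := Submodule.ne_bot_iff _ |>.mp (hne u)
  obtain ⟨x, hxy⟩ := exists_lie_ne_zero (R := R) hy0
  have hbot : ⨆ w ∈ A, ℒ w ≠ ⊥ := fun h =>
    hxy ((Submodule.mem_bot R).mp (h ▸ hℒ.lie_mem_biSup hsup (closed u (Or.inl rfl)) x hy))
  exact hind.mem_of_biSup_eq_top (Submodule.eq_top_of_forall_lie_mem hideal hbot) (hne v)

end LieAlgebra

theorem statement15_general (L : Type) [LieRing L] [LieAlgebra ℂ L]
    (hsimple : LieAlgebra.IsSimple ℂ L)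
    (J : Type) (ℒ : J → Submodule ℂ L) (hΓ : IsGrading ℒ)
    (hsemi : ∃ (S : Type) (_ : CommSemigroup S) (ι : J → S),
      Function.Injective ι ∧
      ∀ j k : J, (¬ ∀ x ∈ ℒ j, ∀ y ∈ ℒ k, ⁅x, y⁆ = 0) →
        ∃ l : J, ι l = ι j * ι k ∧ ∀ x ∈ ℒ j, ∀ y ∈ ℒ k, ⁅x, y⁆ ∈ ℒ l) :
    ∃ (G : Type) (_ : CommGroup G) (κ : J → G),
      Function.Injective κ ∧
      ∀ j k : J, (¬ ∀ x ∈ ℒ j, ∀ y ∈ ℒ k, ⁅x, y⁆ = 0) →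
        ∃ l : J, κ l = κ j * κ k ∧ ∀ x ∈ ℒ j, ∀ y ∈ ℒ k, ⁅x, y⁆ ∈ ℒ l := by
  obtain ⟨hind, hsup, hne, -⟩ := hΓ
  obtain ⟨S, _, ι, hinj, hℒ : IsGradedBy ℒ ι⟩ := hsemi
  have : Nontrivial L := LieAlgebra.IsSimple.nontrivial ℂ L
  have : Nonempty J := nonempty_of_iSup_eq_top hsup
  set P := Subsemigroup.closure (Set.range ι)
  let κ (j : J) : P := ⟨ι j, Subsemigroup.subset_closure ⟨j, rfl⟩⟩
  have hdiv : ∀ x y : P, ∃ c, c * x = y := by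
    rintro ⟨x, hx⟩ ⟨y, hy⟩
    obtain ⟨c, hc, hcxy⟩ := Subsemigroup.exists_mul_eq_of_mem_closure
      (by rintro _ ⟨u, rfl⟩ _ ⟨v, rfl⟩; exact hℒ.exists_mul_eq hind hsup hne u v)
      (Set.range_nonempty ι) hx hy
    exact ⟨⟨c, hc⟩, Subtype.ext hcxy⟩
  have : Nonempty P := ⟨κ (Classical.arbitrary J)⟩
  refine ⟨P, CommGroup.ofExistsMulEq P hdiv, κ, fun a b h => hinj (congrArg Subtype.val h),
    fun j k hjk => ?_⟩
  obtain ⟨l, hl, hmem⟩ := hℒ j k hjk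
  exact ⟨l, Subtype.ext hl, hmem⟩

/-- let `L` be a finite-dimensional simple complex Lie algebra and
`Γ : L = ⊕_{j∈J} L_j` a grading of `L`.  If the index set `J` embeds into a commutative
semigroup `S` such that `[L_j, L_k] ≠ 0` implies `j·k ∈ J` and `[L_j, L_k] ⊆ L_{j·k}`,
then `J` also embeds into an abelian group with the same property; that is, `Γ` is a
group grading. -/
theorem statement15 (L : Type) [LieRing L] [LieAlgebra ℂ L] [FiniteDimensional ℂ L]
    (hsimple : LieAlgebra.IsSimple ℂ L)
    (J : Type) (ℒ : J → Submodule ℂ L) (hΓ : IsGrading ℒ)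
    (hsemi : ∃ (S : Type) (_ : CommSemigroup S) (ι : J → S),
      Function.Injective ι ∧
      ∀ j k : J, (¬ ∀ x ∈ ℒ j, ∀ y ∈ ℒ k, ⁅x, y⁆ = 0) →
        ∃ l : J, ι l = ι j * ι k ∧ ∀ x ∈ ℒ j, ∀ y ∈ ℒ k, ⁅x, y⁆ ∈ ℒ l) :
    ∃ (G : Type) (_ : CommGroup G) (κ : J → G),
      Function.Injective κ ∧
      ∀ j k : J, (¬ ∀ x ∈ ℒ j, ∀ y ∈ ℒ k, ⁅x, y⁆ = 0) →
        ∃ l : J, κ l = κ j * κ k ∧ ∀ x ∈ ℒ j, ∀ y ∈ ℒ k, ⁅x, y⁆ ∈ ℒ l :=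
  statement15_general L hsimple J ℒ hΓ hsemi
end
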